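/- arXiv:2407.13612 — 4 statements merged into one kernel-verified Lean document; each statement's English description precedes it below -/
import Mathlib

section
/- Let G be a multigraph with vertices partitioned into free and fixed vertices, and let 0 ≤ m ≤ 2 and 0 ≤ l ≤ 3. Suppose v is a free vertex of degree 3 with no incident loops, and suppose G is (2,m,l)-sparse, i.e. every subgraph H satisfies |E(H)| ≤ 2|V̄(H)| + m|V₀(H)| − l. Then G − v has no (2,m,l)-tight subgraph containing all neighbours of v. -/
open scoped Classical

structure Multigraph (α β : Type*) where
  V : Finset α
  E : Finset β
  fst : β → α
  snd : β → α
  fixed : Finset α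
  fixed_sub : fixed ⊆ V
  fst_mem : ∀ e ∈ E, fst e ∈ V
  snd_mem : ∀ e ∈ E, snd e ∈ V

namespace Multigraph

variable {α β : Type*} [DecidableEq α] [DecidableEq β]

/-- The free vertices of the multigraph. -/
def freeV (G : Multigraph α β) : Finset α := G.V \ G.fixed

/-- The degree of a vertex: each loop contributes 2. -/
def deg (G : Multigraph α β) (v : α) : ℕ :=
  (G.E.filter (fun e => G.fst e = v)).card + (G.E.filter (fun e => G.snd e = v)).card

/-- The neighbours of a vertex. -/
def nbrs (G : Multigraph α β) (v : α) : Finset α :=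
  ((G.E.filter (fun e => G.fst e = v)).image G.snd) ∪
    ((G.E.filter (fun e => G.snd e = v)).image G.fst)

/-- A subgraph of a multigraph. -/
structure Subgraph (G : Multigraph α β) where
  V : Finset α
  E : Finset β
  V_sub : V ⊆ G.V
  E_sub : E ⊆ G.E
  fst_mem : ∀ e ∈ E, G.fst e ∈ V
  snd_mem : ∀ e ∈ E, G.snd e ∈ V

/-- The free vertices of a subgraph. -/
def Subgraph.freeV {G : Multigraph α β} (H : Subgraph G) : Finset α := H.V \ G.fixed

/-- The fixed vertices of a subgraph. -/
def Subgraph.fixedV {G : Multigraph α β} (H : Subgraph G) : Finset α := H.V ∩ G.fixed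

/-- The sparsity count `2|V̄(H)| + m|V₀(H)| - l` of a subgraph, as an integer. -/
def Subgraph.count {G : Multigraph α β} (m l : ℤ) (H : Subgraph G) : ℤ :=
  2 * (H.freeV.card : ℤ) + m * (H.fixedV.card : ℤ) - l

/-- `(2,m,l)`-sparsity: every subgraph satisfies the count. -/
def Sparse (G : Multigraph α β) (m l : ℤ) : Prop :=
  ∀ H : Subgraph G, (H.E.card : ℤ) ≤ H.count m l

/-- The whole graph, as a subgraph of itself. -/
def top (G : Multigraph α β) : Subgraph G :=
  ⟨G.V, G.E, Finset.Subset.refl _, Finset.Subset.refl _, G.fst_mem, G.snd_mem⟩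

/-- `(2,m,l)`-tightness: sparsity together with equality for the whole graph. -/
def Tight (G : Multigraph α β) (m l : ℤ) : Prop :=
  G.Sparse m l ∧ (G.E.card : ℤ) = (G.top).count m l

/-- Adjacency via an edge of the given edge set. -/
def Adj (G : Multigraph α β) (ES : Finset β) (a b : α) : Prop :=
  ∃ e ∈ ES, (G.fst e = a ∧ G.snd e = b) ∨ (G.fst e = b ∧ G.snd e = a)

/-- Reachability using edges of the given edge set. -/
def Reach (G : Multigraph α β) (ES : Finset β) : α → α → Prop :=
  Relation.ReflTransGen (G.Adj ES)

/-- The connected component of a vertex in the (sub)graph `(VS, ES)`. -/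
noncomputable def componentOf (G : Multigraph α β) (VS : Finset α) (ES : Finset β) (v : α) :
    Finset α :=
  VS.filter (fun u => G.Reach ES u v)

/-- The set of connected components of the (sub)graph `(VS, ES)`. -/
noncomputable def components (G : Multigraph α β) (VS : Finset α) (ES : Finset β) :
    Finset (Finset α) :=
  VS.image (G.componentOf VS ES)

end Multigraph

/-
Adding a free vertex `v ∉ H` together with its edges to a subgraph `H` that already contains
all neighbours of `v` raises the count by 2 and the number of edges by `deg v`. So for `deg v = 3`,
a tight `H` would produce a subgraph with one edge more than sparsity allows.
-/

namespace Multigraph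

variable {α β : Type*} [DecidableEq α] [DecidableEq β] {G : Multigraph α β} {v : α}

def incidentEdges (G : Multigraph α β) (v : α) : Finset β :=
  G.E.filter fun e => G.fst e = v ∨ G.snd e = v

theorem card_incidentEdges (hnoloop : ∀ e ∈ G.E, ¬(G.fst e = v ∧ G.snd e = v)) :
    (G.incidentEdges v).card = G.deg v := by
  rw [incidentEdges, Finset.filter_or, Finset.card_union_of_disjoint, deg]
  exact Finset.disjoint_filter.2 fun e he h₁ h₂ => hnoloop e he ⟨h₁, h₂⟩

namespace Subgraph

variable (H : G.Subgraph) (hv : v ∈ G.V) (hfst : ∀ e ∈ G.E, G.fst e = v → G.snd e ∈ H.V)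
  (hsnd : ∀ e ∈ G.E, G.snd e = v → G.fst e ∈ H.V)

def insertVertex : G.Subgraph where
  V := insert v H.V
  E := H.E ∪ G.incidentEdges v
  V_sub := Finset.insert_subset hv H.V_sub
  E_sub := Finset.union_subset H.E_sub (Finset.filter_subset _ _)
  fst_mem e he := by
    rcases Finset.mem_union.mp he with heH | heI
    · exact Finset.mem_insert_of_mem (H.fst_mem e heH)
    · obtain ⟨heG, hfst_v | hsnd_v⟩ := Finset.mem_filter.mp heI
      · exact hfst_v ▸ Finset.mem_insert_self _ _
      · exact Finset.mem_insert_of_mem (hsnd e heG hsnd_v)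
  snd_mem e he := by
    rcases Finset.mem_union.mp he with heH | heI
    · exact Finset.mem_insert_of_mem (H.snd_mem e heH)
    · obtain ⟨heG, hfst_v | hsnd_v⟩ := Finset.mem_filter.mp heI
      · exact Finset.mem_insert_of_mem (hfst e heG hfst_v)
      · exact hsnd_v ▸ Finset.mem_insert_self _ _

variable {H}

theorem card_E_insertVertex (hvH : v ∉ H.V) :
    (H.insertVertex hv hfst hsnd).E.card = H.E.card + (G.incidentEdges v).card := by
  refine Finset.card_union_of_disjoint (Finset.disjoint_left.2 fun e heH heI => ?_)
  rcases (Finset.mem_filter.mp heI).2 with h | h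
  · exact hvH (h ▸ H.fst_mem e heH)
  · exact hvH (h ▸ H.snd_mem e heH)

theorem count_insertVertex (m l : ℤ) (hvfree : v ∉ G.fixed) (hvH : v ∉ H.V) :
    (H.insertVertex hv hfst hsnd).count m l = H.count m l + 2 := by
  have hfree : (H.insertVertex hv hfst hsnd).freeV = insert v H.freeV :=
    Finset.insert_sdiff_of_notMem _ hvfree
  have hfixed : (H.insertVertex hv hfst hsnd).fixedV = H.fixedV :=
    Finset.insert_inter_of_notMem hvfree
  have hvH' : v ∉ H.freeV := fun h => hvH (Finset.mem_sdiff.mp h).1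
  simp only [count, hfree, hfixed, Finset.card_insert_of_notMem hvH']
  push_cast
  ring

end Subgraph

theorem Sparse.card_E_add_deg_le {m l : ℤ} (hsparse : G.Sparse m l) (hv : v ∈ G.freeV)
    (hnoloop : ∀ e ∈ G.E, ¬(G.fst e = v ∧ G.snd e = v)) (H : G.Subgraph) (hvH : v ∉ H.V)
    (hfst : ∀ e ∈ G.E, G.fst e = v → G.snd e ∈ H.V)
    (hsnd : ∀ e ∈ G.E, G.snd e = v → G.fst e ∈ H.V) :
    (H.E.card : ℤ) + G.deg v ≤ H.count m l + 2 := by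
  obtain ⟨hvV, hvfree⟩ := Finset.mem_sdiff.mp hv
  have h := hsparse (H.insertVertex hvV hfst hsnd)
  rwa [Subgraph.count_insertVertex hvV hfst hsnd m l hvfree hvH,
    Subgraph.card_E_insertVertex hvV hfst hsnd hvH, card_incidentEdges hnoloop,
    Nat.cast_add] at h

end Multigraph

theorem statement3_general {α β : Type*} [DecidableEq α] [DecidableEq β]
    (G : Multigraph α β) (m l : ℤ)
    (v : α) (hv : v ∈ G.freeV) (hdeg : G.deg v = 3)
    (hnoloop : ∀ e ∈ G.E, ¬(G.fst e = v ∧ G.snd e = v))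
    (hsparse : G.Sparse m l) :
    ¬ ∃ H : G.Subgraph, v ∉ H.V ∧
        (∀ e ∈ G.E, G.fst e = v → G.snd e ∈ H.V) ∧
        (∀ e ∈ G.E, G.snd e = v → G.fst e ∈ H.V) ∧
        (H.E.card : ℤ) = H.count m l := by
  rintro ⟨H, hvH, hfst, hsnd, htight⟩
  have h := hsparse.card_E_add_deg_le hv hnoloop H hvH hfst hsnd
  rw [hdeg] at h
  omega

/-- if G is (2,m,l)-sparse (0 ≤ m ≤ 2, 0 ≤ l ≤ 3) and v is a free vertex of
degree 3 with no incident loops, then G - v has no (2,m,l)-tight subgraph containing all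
neighbours of v. -/
theorem statement3 {α β : Type*} [DecidableEq α] [DecidableEq β]
    (G : Multigraph α β) (m l : ℤ)
    (hm0 : 0 ≤ m) (hm2 : m ≤ 2) (hl0 : 0 ≤ l) (hl3 : l ≤ 3)
    (v : α) (hv : v ∈ G.freeV) (hdeg : G.deg v = 3)
    (hnoloop : ∀ e ∈ G.E, ¬(G.fst e = v ∧ G.snd e = v))
    (hsparse : G.Sparse m l) :
    ¬ ∃ H : G.Subgraph, v ∉ H.V ∧
        (∀ e ∈ G.E, G.fst e = v → G.snd e ∈ H.V) ∧
        (∀ e ∈ G.E, G.snd e = v → G.fst e ∈ H.V) ∧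
        (H.E.card : ℤ) = H.count m l :=
  statement3_general G m l v hv hdeg hnoloop hsparse
end

section
/- Let Γ be a group and let (G,ψ) be a Γ-gain graph (a directed multigraph with edge labels in Γ and a free/fixed vertex partition). Let H₁, H₂ be connected subgraphs, each balanced (every cycle avoiding fixed vertices has gain id after removing fixed vertices and their incident edges). If the graph obtained from H₁ ∩ H₂ by deleting its fixed vertices is connected, then H₁ ∪ H₂ is balanced. -/
open scoped Classical

/-- A Γ-gain graph: a directed multigraph with edge gains in a group Γ and a
distinguished set of fixed vertices. -/
structure GainGraph (α β Γ : Type*) [Group Γ] where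
  V : Finset α
  E : Finset β
  tail : β → α
  head : β → α
  gain : β → Γ
  fixed : Finset α
  fixed_sub : fixed ⊆ V
  tail_mem : ∀ e ∈ E, tail e ∈ V
  head_mem : ∀ e ∈ E, head e ∈ V

namespace GainGraph

variable {α β Γ : Type*} [Group Γ] [DecidableEq α] [DecidableEq β]

/-- `IsWalkFrom G F a b w`: `w` is a walk from `a` to `b` using edges of `F`,
each traversed forwards (`true`) or backwards (`false`). -/
def IsWalkFrom (G : GainGraph α β Γ) (F : Finset β) : α → α → List (β × Bool) → Prop
  | a, b, [] => a = b
  | a, b, (e, d) :: w => e ∈ F ∧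
      (if d then G.tail e = a ∧ IsWalkFrom G F (G.head e) b w
       else G.head e = a ∧ IsWalkFrom G F (G.tail e) b w)

/-- The gain of a walk with respect to a gain function `ψ`. -/
def walkGain (ψ : β → Γ) (w : List (β × Bool)) : Γ :=
  (w.map (fun p => if p.2 then ψ p.1 else (ψ p.1)⁻¹)).prod

/-- An edge set `F` is balanced (w.r.t. the gain function `ψ`) if every closed walk in `F`
avoiding the fixed vertices has gain `id`. -/
def BalancedSet (G : GainGraph α β Γ) (ψ : β → Γ) (F : Finset β) : Prop :=
  ∀ (v : α) (w : List (β × Bool)), G.IsWalkFrom F v v w →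
    (∀ p ∈ w, G.tail p.1 ∉ G.fixed ∧ G.head p.1 ∉ G.fixed) → walkGain ψ w = 1

/-- A subgraph of a gain graph. -/
structure Subgraph (G : GainGraph α β Γ) where
  V : Finset α
  E : Finset β
  V_sub : V ⊆ G.V
  E_sub : E ⊆ G.E
  tail_mem : ∀ e ∈ E, G.tail e ∈ V
  head_mem : ∀ e ∈ E, G.head e ∈ V

/-- Adjacency via an edge of the given edge set (ignoring directions). -/
def Adj (G : GainGraph α β Γ) (F : Finset β) (a b : α) : Prop :=
  ∃ e ∈ F, (G.tail e = a ∧ G.head e = b) ∨ (G.tail e = b ∧ G.head e = a)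

/-- Connectivity of the (sub)graph with vertex set `VS` and edge set `F`. -/
def ConnectedOn (G : GainGraph α β Γ) (VS : Finset α) (F : Finset β) : Prop :=
  ∀ a ∈ VS, ∀ b ∈ VS, Relation.ReflTransGen (G.Adj F) a b

/-- Equivalence of gain functions, generated by switchings at free vertices and
relabellings of edges joining a fixed and a free vertex. -/
inductive GainEquiv (G : GainGraph α β Γ) : (β → Γ) → (β → Γ) → Prop
  | refl (ψ : β → Γ) : GainEquiv G ψ ψ
  | switch (ψ : β → Γ) (v : α) (hv : v ∈ G.V) (hfree : v ∉ G.fixed) (γ : Γ) :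
      GainEquiv G ψ (fun e =>
        if G.tail e = G.head e then ψ e
        else if G.tail e = v then γ * ψ e
        else if G.head e = v then ψ e * γ⁻¹
        else ψ e)
  | relabel (ψ : β → Γ) (e : β) (he : e ∈ G.E)
      (hfx : (G.tail e ∈ G.fixed ∧ G.head e ∉ G.fixed) ∨
             (G.tail e ∉ G.fixed ∧ G.head e ∈ G.fixed)) (γ : Γ) :
      GainEquiv G ψ (Function.update ψ e γ)
  | trans {ψ₁ ψ₂ ψ₃ : β → Γ} :
      GainEquiv G ψ₁ ψ₂ → GainEquiv G ψ₂ ψ₃ → GainEquiv G ψ₁ ψ₃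

/-- An edge set is a forest if every nonempty subset has more incident vertices than edges. -/
def IsForest (G : GainGraph α β Γ) (F : Finset β) : Prop :=
  ∀ F' ⊆ F, F'.Nonempty → F'.card < (F'.image G.tail ∪ F'.image G.head).card

end GainGraph

/-!
Balance of an edge set says that the gain of a free walk in it depends only on its endpoints.
A closed free walk in `H₁ ∪ H₂` that uses edges of both subgraphs can be rotated to start at a
junction, a vertex where it passes from an edge of one subgraph to an edge of the other; junctions
are free vertices of `H₁ ∩ H₂`. Between consecutive junctions the walk stays in one `Hᵢ`, so each
such segment may be replaced by a walk between the same junctions in the free part of `H₁ ∩ H₂`,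
which exists by connectivity and lies in both subgraphs. The result is a closed walk in `H₁`,
whose gain is trivial.
-/

theorem exists_adjacent_not_iff {X : Type*} {p : X → Prop} {l : List X}
    (hx : ∃ x ∈ l, p x) (hy : ∃ y ∈ l, ¬ p y) :
    ∃ l₁ x y l₂, l = l₁ ++ x :: y :: l₂ ∧ ¬(p x ↔ p y) := by
  by_contra! h
  have hchain : l.IsChain (fun x y => p x ↔ p y) :=
    List.isChain_iff_forall_rel_of_append_cons_cons.2 fun x y l₁ l₂ hl => h l₁ x y l₂ hl
  obtain ⟨x, hxl, hpx⟩ := hx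
  obtain ⟨y, hyl, hpy⟩ := hy
  have hne : l ≠ [] := List.ne_nil_of_mem hxl
  by_cases hhead : p (l.head hne)
  · exact hpy (hchain.induction p l (fun _ _ hxy => hxy.1) (fun _ => hhead) y hyl)
  · exact hchain.induction (¬ p ·) l (fun _ _ hxy => mt hxy.2) (fun _ => hhead) x hxl hpx

namespace GainGraph

variable {α β Γ : Type*} [Group Γ] {G : GainGraph α β Γ} {F F' : Finset β} {a b c : α}
  {q : β × Bool} {w w₁ w₂ : List (β × Bool)} {ψ : β → Γ}

lemma isWalkFrom_append :
    G.IsWalkFrom F a c (w₁ ++ w₂) ↔ ∃ b, G.IsWalkFrom F a b w₁ ∧ G.IsWalkFrom F b c w₂ := by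
  induction w₁ generalizing a with
  | nil => simp [IsWalkFrom]
  | cons q w ih =>
    obtain ⟨e, d⟩ := q
    cases d <;> simp [IsWalkFrom, ih, and_assoc]

lemma isWalkFrom_singleton :
    G.IsWalkFrom F a b [q] ↔ q.1 ∈ F ∧
      if q.2 then G.tail q.1 = a ∧ G.head q.1 = b else G.head q.1 = a ∧ G.tail q.1 = b := by
  obtain ⟨e, d⟩ := q
  cases d <;> simp [IsWalkFrom]

lemma IsWalkFrom.edge_mem (h : G.IsWalkFrom F a b w) (hq : q ∈ w) : q.1 ∈ F := by
  induction w generalizing a with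
  | nil => cases hq
  | cons q' w ih =>
    obtain ⟨e, d⟩ := q'
    rcases List.mem_cons.1 hq with rfl | hqw
    · exact h.1
    · cases d <;> exact ih h.2.2 hqw

lemma IsWalkFrom.restrict (h : G.IsWalkFrom F a b w) (hw : ∀ q ∈ w, q.1 ∈ F') :
    G.IsWalkFrom F' a b w := by
  induction w generalizing a with
  | nil => exact h
  | cons q w ih =>
    obtain ⟨e, d⟩ := q
    have hw' : ∀ q ∈ w, q.1 ∈ F' := fun q hq => hw q (List.mem_cons_of_mem _ hq)
    cases d
    · exact ⟨hw _ List.mem_cons_self, h.2.1, ih h.2.2 hw'⟩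
    · exact ⟨hw _ List.mem_cons_self, h.2.1, ih h.2.2 hw'⟩

lemma IsWalkFrom.mono (h : G.IsWalkFrom F a b w) (hF : F ⊆ F') : G.IsWalkFrom F' a b w :=
  h.restrict fun _ hq => hF (h.edge_mem hq)

lemma isWalkFrom_filter {P : β → Prop} [DecidablePred P] :
    G.IsWalkFrom (F.filter P) a b w ↔ G.IsWalkFrom F a b w ∧ ∀ q ∈ w, P q.1 :=
  ⟨fun h => ⟨h.mono (Finset.filter_subset P F),
      fun _ hq => (Finset.mem_filter.1 (h.edge_mem hq)).2⟩,
    fun ⟨h, hP⟩ => h.restrict fun q hq => Finset.mem_filter.2 ⟨h.edge_mem hq, hP q hq⟩⟩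

lemma IsWalkFrom.mem_of_singleton {V : Finset α} (h : G.IsWalkFrom F a b [q])
    (hV : G.tail q.1 ∈ V ∧ G.head q.1 ∈ V) : a ∈ V ∧ b ∈ V := by
  obtain ⟨e, d⟩ := q
  rw [isWalkFrom_singleton] at h
  cases d <;> simp_all

def walkReverse (w : List (β × Bool)) : List (β × Bool) :=
  (w.map fun q => (q.1, !q.2)).reverse

lemma walkReverse_cons : walkReverse (q :: w) = walkReverse w ++ [(q.1, !q.2)] := by
  simp [walkReverse]

lemma IsWalkFrom.reverse (h : G.IsWalkFrom F a b w) : G.IsWalkFrom F b a (walkReverse w) := by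
  induction w generalizing a with
  | nil => exact h.symm
  | cons q w ih =>
    obtain ⟨e, d⟩ := q
    rw [walkReverse_cons]
    cases d
    · exact isWalkFrom_append.2 ⟨_, ih h.2.2, isWalkFrom_singleton.2 ⟨h.1, by simp [h.2.1]⟩⟩
    · exact isWalkFrom_append.2 ⟨_, ih h.2.2, isWalkFrom_singleton.2 ⟨h.1, by simp [h.2.1]⟩⟩

lemma walkGain_nil : walkGain ψ [] = 1 := rfl

lemma walkGain_append : walkGain ψ (w₁ ++ w₂) = walkGain ψ w₁ * walkGain ψ w₂ := by
  simp [walkGain]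

lemma walkGain_walkReverse : walkGain ψ (walkReverse w) = (walkGain ψ w)⁻¹ := by
  induction w with
  | nil => simp [walkGain, walkReverse]
  | cons q w ih =>
    rw [walkReverse_cons, walkGain_append, ih]
    cases h : q.2 <;> simp [walkGain, h]

lemma exists_walk_of_adj (h : G.Adj F a b) : ∃ q, G.IsWalkFrom F a b [q] := by
  obtain ⟨e, he, ⟨ht, hh⟩ | ⟨ht, hh⟩⟩ := h
  · exact ⟨(e, true), isWalkFrom_singleton.2 ⟨he, by simp [ht, hh]⟩⟩
  · exact ⟨(e, false), isWalkFrom_singleton.2 ⟨he, by simp [ht, hh]⟩⟩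

lemma ConnectedOn.exists_walk {V : Finset α} (h : G.ConnectedOn V F) (ha : a ∈ V)
    (hb : b ∈ V) : ∃ w, G.IsWalkFrom F a b w := by
  have hab := h a ha b hb
  clear hb
  induction hab with
  | refl => exact ⟨[], rfl⟩
  | tail _ hadj ih =>
    obtain ⟨w, hw⟩ := ih
    obtain ⟨q, hq⟩ := exists_walk_of_adj hadj
    exact ⟨w ++ [q], isWalkFrom_append.2 ⟨_, hw, hq⟩⟩

def ClosedWalksBalanced (G : GainGraph α β Γ) (ψ : β → Γ) (F : Finset β) : Prop :=
  ∀ v w, G.IsWalkFrom F v v w → walkGain ψ w = 1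

lemma ClosedWalksBalanced.walkGain_eq (hF : G.ClosedWalksBalanced ψ F)
    (h₁ : G.IsWalkFrom F a b w₁) (h₂ : G.IsWalkFrom F a b w₂) :
    walkGain ψ w₁ = walkGain ψ w₂ := by
  have hcycle := hF a _ (isWalkFrom_append.2 ⟨b, h₁, h₂.reverse⟩)
  rw [walkGain_append, walkGain_walkReverse] at hcycle
  exact eq_of_mul_inv_eq_one hcycle

section Union

variable [DecidableEq α] [DecidableEq β] {A B C : Finset β} {VA VB : Finset α}

-- `p` is the stretch of the walk since the last junction `c`; it stays inside `A`.
lemma walkGain_append_eq_of_isWalkFrom_union (hA : G.ClosedWalksBalanced ψ A)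
    (hB : G.ClosedWalksBalanced ψ B) (hCA : C ⊆ A) (hCB : C ⊆ B)
    (hVA : ∀ e ∈ A, G.tail e ∈ VA ∧ G.head e ∈ VA)
    (hVB : ∀ e ∈ B, G.tail e ∈ VB ∧ G.head e ∈ VB) (hC : G.ConnectedOn (VA ∩ VB) C)
    {p u : List (β × Bool)} (hc : c ∈ VA ∩ VB) (ha : a ∈ VA) (hb : b ∈ VA ∩ VB)
    (hp : G.IsWalkFrom A c a p) (hw : G.IsWalkFrom (A ∪ B) a b w)
    (hu : G.IsWalkFrom C c b u) :
    walkGain ψ (p ++ w) = walkGain ψ u := by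
  induction w generalizing A B VA VB a c p u with
  | nil =>
    obtain rfl : a = b := hw
    rw [List.append_nil]
    exact hA.walkGain_eq hp (hu.mono hCA)
  | cons q w ih =>
    obtain ⟨a', hq, hw⟩ := (isWalkFrom_append (w₁ := [q])).1 hw
    have hq_mem : ∀ {F : Finset β}, q.1 ∈ F → ∀ q' ∈ [q], q'.1 ∈ F := fun h _ hq' =>
      List.mem_singleton.1 hq' ▸ h
    by_cases hqA : q.1 ∈ A
    · rw [← List.singleton_append, ← List.append_assoc]
      exact ih hA hB hCA hCB hVA hVB hC hc (hq.mem_of_singleton (hVA _ hqA)).2 hb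
        (isWalkFrom_append.2 ⟨a, hp, hq.restrict (hq_mem hqA)⟩) hw hu
    -- From here on `a` lies on an edge of `A` and on one of `B`, so the walk can be cut there.
    have hqB : q.1 ∈ B :=
      (Finset.mem_union.1 (hq.edge_mem (List.mem_singleton_self q))).resolve_left hqA
    have haB := hq.mem_of_singleton (hVB _ hqB)
    have ha' : a ∈ VA ∩ VB := Finset.mem_inter.2 ⟨ha, haB.1⟩
    obtain ⟨u₁, hu₁⟩ := hC.exists_walk hc ha'
    obtain ⟨u₂, hu₂⟩ := hC.exists_walk ha' hb
    have hrest : walkGain ψ ([q] ++ w) = walkGain ψ u₂ := by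
      rw [Finset.inter_comm] at hC ha' hb
      exact ih hB hA hCB hCA hVB hVA hC ha' haB.2 hb (hq.restrict (hq_mem hqB))
        (Finset.union_comm A B ▸ hw) hu₂
    calc walkGain ψ (p ++ q :: w) = walkGain ψ p * walkGain ψ ([q] ++ w) := walkGain_append
      _ = walkGain ψ u₁ * walkGain ψ u₂ := by rw [hA.walkGain_eq hp (hu₁.mono hCA), hrest]
      _ = walkGain ψ (u₁ ++ u₂) := walkGain_append.symm
      _ = walkGain ψ u :=
        hA.walkGain_eq ((isWalkFrom_append.2 ⟨a, hu₁, hu₂⟩).mono hCA) (hu.mono hCA)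

lemma ClosedWalksBalanced.union (hA : G.ClosedWalksBalanced ψ A)
    (hB : G.ClosedWalksBalanced ψ B) (hCA : C ⊆ A) (hCB : C ⊆ B)
    (hVA : ∀ e ∈ A, G.tail e ∈ VA ∧ G.head e ∈ VA)
    (hVB : ∀ e ∈ B, G.tail e ∈ VB ∧ G.head e ∈ VB) (hC : G.ConnectedOn (VA ∩ VB) C) :
    G.ClosedWalksBalanced ψ (A ∪ B) := by
  intro v w hw
  by_cases hwA : ∀ q ∈ w, q.1 ∈ A
  · exact hA v w (hw.restrict hwA)
  by_cases hwB : ∀ q ∈ w, q.1 ∈ B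
  · exact hB v w (hw.restrict hwB)
  push Not at hwA hwB
  obtain ⟨x₀, hx₀w, hx₀B⟩ := hwB
  have hx₀A : x₀.1 ∈ A := (Finset.mem_union.1 (hw.edge_mem hx₀w)).resolve_right hx₀B
  obtain ⟨l₁, x, y, l₂, rfl, hxy⟩ :=
    exists_adjacent_not_iff (p := fun q => q.1 ∈ A) ⟨x₀, hx₀w, hx₀A⟩ hwA
  rw [show l₁ ++ x :: y :: l₂ = (l₁ ++ [x]) ++ (y :: l₂) by simp] at hw ⊢
  obtain ⟨m, hvm, hmv⟩ := isWalkFrom_append.1 hw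
  obtain ⟨_, -, hx⟩ := isWalkFrom_append.1 hvm
  obtain ⟨_, hy, -⟩ := (isWalkFrom_append (w₁ := [y])).1 hmv
  have hmem_B : ∀ {q s t}, G.IsWalkFrom (A ∪ B) s t [q] → q.1 ∉ A → q.1 ∈ B := fun h hqA =>
    (Finset.mem_union.1 (h.edge_mem (List.mem_singleton_self _))).resolve_left hqA
  have hm : m ∈ VA ∩ VB := by
    rw [Finset.mem_inter]
    by_cases hxA : x.1 ∈ A
    · have hyB := hmem_B hy fun hyA => hxy (iff_of_true hxA hyA)
      exact ⟨(hx.mem_of_singleton (hVA _ hxA)).2, (hy.mem_of_singleton (hVB _ hyB)).1⟩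
    · have hxB := hmem_B hx hxA
      have hyA : y.1 ∈ A := by tauto
      exact ⟨(hy.mem_of_singleton (hVA _ hyA)).1, (hx.mem_of_singleton (hVB _ hxB)).2⟩
  -- Rotating the closed walk to start at the junction `m` does not affect whether its gain is `1`.
  have hrot := walkGain_append_eq_of_isWalkFrom_union (ψ := ψ) hA hB hCA hCB hVA hVB hC hm
    (Finset.mem_inter.1 hm).1 hm (p := []) (u := []) rfl (isWalkFrom_append.2 ⟨v, hmv, hvm⟩) rfl
  rw [List.nil_append, walkGain_append, walkGain_nil] at hrot
  rw [walkGain_append]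
  exact mul_eq_one_comm.1 hrot

end Union

def freeEdges [DecidableEq α] (G : GainGraph α β Γ) (F : Finset β) : Finset β :=
  F.filter fun e => G.tail e ∉ G.fixed ∧ G.head e ∉ G.fixed

lemma balancedSet_iff [DecidableEq α] :
    G.BalancedSet ψ F ↔ G.ClosedWalksBalanced ψ (G.freeEdges F) := by
  simp only [BalancedSet, ClosedWalksBalanced, freeEdges, isWalkFrom_filter, and_imp]

lemma Subgraph.endpoints_mem_freeEdges [DecidableEq α] (H : G.Subgraph) :
    ∀ e ∈ G.freeEdges H.E, G.tail e ∈ H.V \ G.fixed ∧ G.head e ∈ H.V \ G.fixed := by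
  intro e he
  obtain ⟨heH, htail, hhead⟩ := Finset.mem_filter.1 he
  exact ⟨Finset.mem_sdiff.2 ⟨H.tail_mem e heH, htail⟩,
    Finset.mem_sdiff.2 ⟨H.head_mem e heH, hhead⟩⟩

end GainGraph

theorem statement4_general {α β Γ : Type*} [Group Γ] [DecidableEq α] [DecidableEq β]
    (G : GainGraph α β Γ) (H₁ H₂ : G.Subgraph)
    (hbal1 : G.BalancedSet G.gain H₁.E) (hbal2 : G.BalancedSet G.gain H₂.E)
    (hconn : G.ConnectedOn ((H₁.V ∩ H₂.V) \ G.fixed)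
        ((H₁.E ∩ H₂.E).filter (fun e => G.tail e ∉ G.fixed ∧ G.head e ∉ G.fixed))) :
    G.BalancedSet G.gain (H₁.E ∪ H₂.E) := by
  rw [GainGraph.balancedSet_iff] at hbal1 hbal2 ⊢
  rw [GainGraph.freeEdges, Finset.filter_union]
  refine hbal1.union hbal2 (C := G.freeEdges (H₁.E ∩ H₂.E))
    (Finset.filter_subset_filter _ Finset.inter_subset_left)
    (Finset.filter_subset_filter _ Finset.inter_subset_right)
    H₁.endpoints_mem_freeEdges H₂.endpoints_mem_freeEdges ?_
  have hV : (H₁.V ∩ H₂.V) \ G.fixed = H₁.V \ G.fixed ∩ (H₂.V \ G.fixed) := inf_sdiff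
  rwa [hV] at hconn

/-- if H₁, H₂ are connected balanced subgraphs of a Γ-gain graph and the graph
obtained from H₁ ∩ H₂ by deleting the fixed vertices is connected, then H₁ ∪ H₂ is
balanced. -/
theorem statement4 {α β Γ : Type*} [Group Γ] [DecidableEq α] [DecidableEq β]
    (G : GainGraph α β Γ) (H₁ H₂ : G.Subgraph)
    (hconn1 : G.ConnectedOn H₁.V H₁.E) (hconn2 : G.ConnectedOn H₂.V H₂.E)
    (hbal1 : G.BalancedSet G.gain H₁.E) (hbal2 : G.BalancedSet G.gain H₂.E)
    (hconn : G.ConnectedOn ((H₁.V ∩ H₂.V) \ G.fixed)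
        ((H₁.E ∩ H₂.E).filter (fun e => G.tail e ∉ G.fixed ∧ G.head e ∉ G.fixed))) :
    G.BalancedSet G.gain (H₁.E ∪ H₂.E) :=
  statement4_general G H₁ H₂ hbal1 hbal2 hconn
end

section
/- Let ω = exp(2πi/k) for an integer k ≥ 2, let 0 ≤ j ≤ k−1 and 1 ≤ t ≤ k−1, and let α = 2πt/k. Define the 2×2 complex matrix A with entries A₁₁ = A₂₂ = (1−cos α)(1+ω^{jt}) and A₁₂ = −A₂₁ = sin(α)(1−ω^{jt}). If A is the zero matrix, then t = k/2 (so k is even) and j is odd. -/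
open Complex

/-!
The (1,1) entry vanishes and `cos α ≠ 1` for `0 < α < 2π`, so `ω ^ (j t) = -1`; the (1,2)
entry then reads `2 sin α = 0`, so `α = π`, i.e. `k = 2t`. Now `ω ^ t` is a primitive square root of
unity, i.e. `-1`, and `ω ^ (j t) = (-1) ^ j = -1` forces `j` odd.
-/

namespace Real

theorem cos_ne_one_of_pos_of_lt_two_pi {x : ℝ} (h0 : 0 < x) (h2 : x < 2 * π) : cos x ≠ 1 :=
  fun h => h0.ne' ((cos_eq_one_iff_of_lt_of_lt (by linarith [pi_pos]) h2).1 h)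

theorem eq_pi_of_sin_eq_zero_of_pos_of_lt_two_pi {x : ℝ} (h0 : 0 < x) (h2 : x < 2 * π)
    (hs : sin x = 0) : x = π := by
  have : sin (x - π) = 0 := by rw [sin_sub_pi, hs, neg_zero]
  linarith [(sin_eq_zero_iff_of_lt_of_lt (by linarith) (by linarith)).1 this]

end Real

theorem eq_neg_one_and_eq_zero_of_mul_eq_zero {R : Type*} [CommRing R] [NoZeroDivisors R]
    [NeZero (2 : R)] {c s z : R} (hc : c ≠ 1) (h₁ : (1 - c) * (1 + z) = 0)
    (h₂ : s * (1 - z) = 0) : z = -1 ∧ s = 0 := by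
  have hz : z = -1 :=
    eq_neg_of_add_eq_zero_right ((mul_eq_zero.1 h₁).resolve_left (sub_ne_zero.2 hc.symm))
  refine ⟨hz, ?_⟩
  rw [hz, sub_neg_eq_add, one_add_one_eq_two] at h₂
  exact (mul_eq_zero.1 h₂).resolve_right two_ne_zero

theorem IsPrimitiveRoot.pow_mul_eq_neg_one_iff_odd {R : Type*} [CommRing R] [NoZeroDivisors R]
    [NeZero (2 : R)] {ζ : R} {t : ℕ} (ht : 0 < t) (hζ : IsPrimitiveRoot ζ (2 * t)) (j : ℕ) :
    ζ ^ (j * t) = -1 ↔ Odd j := by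
  have hζt : ζ ^ t = -1 := (hζ.pow (by omega) (mul_comm 2 t)).eq_neg_one_of_two_right
  rw [mul_comm, pow_mul, hζt]
  refine neg_one_pow_eq_neg_one_iff_odd fun h => two_ne_zero (α := R) ?_
  linear_combination -h

theorem statement8_general (k : ℕ) (j t : ℕ)
    (ht1 : 1 ≤ t) (htk : t ≤ k - 1) :
    letI ω : ℂ := Complex.exp (2 * (Real.pi : ℂ) * Complex.I / (k : ℂ))
    letI α : ℝ := 2 * Real.pi * (t : ℝ) / (k : ℝ)
    letI A : Matrix (Fin 2) (Fin 2) ℂ :=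
      !![(1 - (Real.cos α : ℂ)) * (1 + ω ^ (j * t)),
         (Real.sin α : ℂ) * (1 - ω ^ (j * t));
         -((Real.sin α : ℂ) * (1 - ω ^ (j * t))),
         (1 - (Real.cos α : ℂ)) * (1 + ω ^ (j * t))]
    A = 0 → k = 2 * t ∧ Odd j := by
  intro hA
  set α : ℝ := 2 * Real.pi * (t : ℝ) / (k : ℝ) with hα
  have hk : (0 : ℝ) < k := by exact_mod_cast (by omega : 0 < k)
  have htk' : (t : ℝ) < k := by exact_mod_cast (by omega : t < k)
  have hα0 : 0 < α := by positivity
  have hα2 : α < 2 * Real.pi := by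
    rw [hα, div_lt_iff₀ hk]; nlinarith [Real.pi_pos]
  obtain ⟨hz, hs⟩ := eq_neg_one_and_eq_zero_of_mul_eq_zero (c := (Real.cos α : ℂ))
    (by exact_mod_cast Real.cos_ne_one_of_pos_of_lt_two_pi hα0 hα2)
    (congrFun (congrFun hA 0) 0) (congrFun (congrFun hA 0) 1)
  have hαπ : α = Real.pi :=
    Real.eq_pi_of_sin_eq_zero_of_pos_of_lt_two_pi hα0 hα2 (by exact_mod_cast hs)
  have hkt : k = 2 * t := by
    rw [hα, div_eq_iff hk.ne'] at hαπ
    exact_mod_cast mul_left_cancel₀ Real.pi_ne_zero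
      (by linarith : Real.pi * k = Real.pi * (2 * t))
  refine ⟨hkt, ?_⟩
  have hω := Complex.isPrimitiveRoot_exp k (by omega)
  rw [hkt] at hω hz
  exact (hω.pow_mul_eq_neg_one_iff_odd (by omega) j).1 (by exact_mod_cast hz)

/-- with ω = exp(2πi/k), α = 2πt/k, if the matrix A with entries
A₁₁ = A₂₂ = (1-cos α)(1+ω^{jt}) and A₁₂ = -A₂₁ = sin(α)(1-ω^{jt}) is zero, then
t = k/2 (so k is even) and j is odd. -/
theorem statement8 (k : ℕ) (hk : 2 ≤ k) (j t : ℕ) (hj : j ≤ k - 1)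
    (ht1 : 1 ≤ t) (htk : t ≤ k - 1) :
    letI ω : ℂ := Complex.exp (2 * (Real.pi : ℂ) * Complex.I / (k : ℂ))
    letI α : ℝ := 2 * Real.pi * (t : ℝ) / (k : ℝ)
    letI A : Matrix (Fin 2) (Fin 2) ℂ :=
      !![(1 - (Real.cos α : ℂ)) * (1 + ω ^ (j * t)),
         (Real.sin α : ℂ) * (1 - ω ^ (j * t));
         -((Real.sin α : ℂ) * (1 - ω ^ (j * t))),
         (1 - (Real.cos α : ℂ)) * (1 + ω ^ (j * t))]
    A = 0 → k = 2 * t ∧ Odd j :=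
  statement8_general k j t ht1 htk
end

section
/- With the same setup: ω = exp(2πi/k), k ≥ 3, 1 ≤ t ≤ k−1, α = 2πt/k, and A the matrix with A₁₁ = A₂₂ = (1−cos α)(1+ω^{jt}), A₁₂ = −A₂₁ = sin(α)(1−ω^{jt}). Suppose additionally that if k is even and j is odd then t ≠ k/2. If A is a scalar multiple of the identity matrix I₂, then ω^{jt} = 1, i.e. k divides j·t; moreover in that case j ∉ {1, k−1}. -/
open Complex

/-!
The off-diagonal entry `sin α (1 - ω^{jt})` of a scalar matrix vanishes. Since `0 < α < 2π`,
`sin α = 0` forces `α = π`, i.e. `k = 2t`; then `j` is even by hypothesis, so `k ∣ jt` and again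
`ω^{jt} = 1`. Finally `k ∣ jt` with `0 < t < k` rules out every `j` coprime to `k`, in particular
`1` and `k - 1`.
-/

theorem Real.two_mul_eq_of_sin_two_pi_mul_div_eq_zero {t k : ℕ} (ht : 0 < t) (htk : t < k)
    (h : Real.sin (2 * Real.pi * t / k) = 0) : 2 * t = k := by
  obtain ⟨n, hn⟩ := Real.sin_eq_zero_iff.mp h
  have hk : (0 : ℝ) < k := by exact_mod_cast ht.trans htk
  have hnk : n * k = 2 * t := by
    have : (n : ℝ) * k = 2 * t := by
      field_simp at hn
      nlinarith [Real.pi_pos]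
    exact_mod_cast this
  have hn1 : n = 1 := by nlinarith
  rw [hn1, one_mul] at hnk
  omega

theorem Nat.not_dvd_mul_of_coprime {k j t : ℕ} (hcop : k.Coprime j) (ht : 0 < t) (htk : t < k) :
    ¬ k ∣ j * t := fun h =>
  absurd (Nat.le_of_dvd ht (hcop.dvd_of_dvd_mul_left h)) (by omega)

theorem statement9_general (k : ℕ) (j t : ℕ)
    (ht1 : 1 ≤ t) (htk : t ≤ k - 1)
    (hcond : Even k → Odd j → 2 * t ≠ k) :
    letI ω : ℂ := Complex.exp (2 * (Real.pi : ℂ) * Complex.I / (k : ℂ))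
    letI α : ℝ := 2 * Real.pi * (t : ℝ) / (k : ℝ)
    letI A : Matrix (Fin 2) (Fin 2) ℂ :=
      !![(1 - (Real.cos α : ℂ)) * (1 + ω ^ (j * t)),
         (Real.sin α : ℂ) * (1 - ω ^ (j * t));
         -((Real.sin α : ℂ) * (1 - ω ^ (j * t))),
         (1 - (Real.cos α : ℂ)) * (1 + ω ^ (j * t))]
    (∃ c : ℂ, A = c • (1 : Matrix (Fin 2) (Fin 2) ℂ)) →
      ω ^ (j * t) = 1 ∧ k ∣ j * t ∧ j ≠ 1 ∧ j ≠ k - 1 := by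
  rintro ⟨c, hc⟩
  set ω : ℂ := Complex.exp (2 * (Real.pi : ℂ) * Complex.I / (k : ℂ))
  have htk' : t < k := by omega
  have hprim := Complex.isPrimitiveRoot_exp k (by omega)
  have hoff := congrFun (congrFun hc 0) 1
  simp only [Matrix.smul_apply, Matrix.one_apply_ne zero_ne_one, smul_zero, Matrix.of_apply,
    Matrix.cons_val', Matrix.cons_val_zero, Matrix.cons_val_one, Matrix.empty_val',
    Matrix.cons_val_fin_one, mul_eq_zero, sub_eq_zero] at hoff
  have hω : ω ^ (j * t) = 1 := by
    rcases hoff with hsin | hω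
    · have h2t := Real.two_mul_eq_of_sin_two_pi_mul_div_eq_zero ht1 htk' (by exact_mod_cast hsin)
      obtain ⟨m, rfl⟩ : Even j :=
        Nat.not_odd_iff_even.mp fun hodd => hcond ⟨t, by omega⟩ hodd h2t
      exact (hprim.pow_eq_one_iff_dvd _).mpr ⟨m, by rw [← h2t]; ring⟩
    · exact hω.symm
  have hdvd := (hprim.pow_eq_one_iff_dvd _).mp hω
  refine ⟨hω, hdvd, ?_, ?_⟩ <;> rintro rfl
  · exact Nat.not_dvd_mul_of_coprime (Nat.coprime_one_right k) ht1 htk' hdvd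
  · exact Nat.not_dvd_mul_of_coprime
      ((Nat.coprime_self_sub_right (by omega)).mpr (Nat.coprime_one_right k)) ht1 htk' hdvd

/-- with ω = exp(2πi/k), k ≥ 3, 1 ≤ t ≤ k-1, α = 2πt/k, and A as before,
assuming t ≠ k/2 whenever k is even and j is odd: if A is a scalar multiple of the
identity, then ω^{jt} = 1 (equivalently k ∣ j·t), and moreover j ∉ {1, k-1}. -/
theorem statement9 (k : ℕ) (hk : 3 ≤ k) (j t : ℕ) (hj : j ≤ k - 1)
    (ht1 : 1 ≤ t) (htk : t ≤ k - 1)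
    (hcond : Even k → Odd j → 2 * t ≠ k) :
    letI ω : ℂ := Complex.exp (2 * (Real.pi : ℂ) * Complex.I / (k : ℂ))
    letI α : ℝ := 2 * Real.pi * (t : ℝ) / (k : ℝ)
    letI A : Matrix (Fin 2) (Fin 2) ℂ :=
      !![(1 - (Real.cos α : ℂ)) * (1 + ω ^ (j * t)),
         (Real.sin α : ℂ) * (1 - ω ^ (j * t));
         -((Real.sin α : ℂ) * (1 - ω ^ (j * t))),
         (1 - (Real.cos α : ℂ)) * (1 + ω ^ (j * t))]
    (∃ c : ℂ, A = c • (1 : Matrix (Fin 2) (Fin 2) ℂ)) →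
      ω ^ (j * t) = 1 ∧ k ∣ j * t ∧ j ≠ 1 ∧ j ≠ k - 1 :=
  statement9_general k j t ht1 htk hcond
end
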